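/- arXiv:1411.6463 — 11 statements merged into one kernel-verified Lean document; each statement's English description precedes it below -/
import Mathlib

section
/- If a terminating automaton M satisfies a MAS S via simulation π, (r, q) ∈ π, and ready(r) = ∅, then q ∈ F and ∅ ∈ Acc(q). Consequently, removing ∅ from Acc(q) for any unmarked state q (F,Acc-consistency enforcement) does not change the set of models of S. -/
attribute [local instance] Classical.propDecidable

/-- A deterministic automaton over alphabet `α` with states `R`:
initial state, partial transition map (encoded with `Option`), and marked states. -/
structure Automaton (α : Type) (R : Type) where
  init : R
  tr : R → α → Option R
  marked : Set R

namespace Automaton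

variable {α R R₂ : Type}

/-- The set of fireable actions from a state. -/
def ready (M : Automaton α R) (r : R) : Set α := {a | (M.tr r a).isSome}

/-- One-step transition relation. -/
def step (M : Automaton α R) (r r' : R) : Prop := ∃ a, M.tr r a = some r'

/-- Reachability from the initial state. -/
def Reachable (M : Automaton α R) (r : R) : Prop := Relation.ReflTransGen M.step M.init r

/-- States reachable from `r` (the set `post(r)`). -/
def post (M : Automaton α R) (r : R) : Set R := {x | Relation.ReflTransGen M.step r x}

/-- `Cycle(r) = pre⁺(r) ∩ post⁺(r)`: states lying on a cycle through `r`. -/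
def Cyc (M : Automaton α R) (r : R) : Set R :=
  {x | Relation.TransGen M.step x r ∧ Relation.TransGen M.step r x}

/-- `r` is a deadlock: unmarked with no fireable action. -/
def Deadlock (M : Automaton α R) (r : R) : Prop := r ∉ M.marked ∧ M.ready r = ∅

/-- `r` belongs to a livelock. -/
def Livelock (M : Automaton α R) (r : R) : Prop :=
  (M.Cyc r).Nonempty ∧ M.marked ∩ M.Cyc r = ∅ ∧
    ¬ ∃ r' a r'', M.tr r' a = some r'' ∧ r' ∈ M.Cyc r ∧ r'' ∉ M.Cyc r

/-- A terminating automaton is deadlock-free and livelock-free. -/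
def Terminating (M : Automaton α R) : Prop :=
  (∀ r, ¬ M.Deadlock r) ∧ (∀ r, ¬ M.Livelock r)

/-- Synchronized product of two automata. -/
def prod (M₁ : Automaton α R) (M₂ : Automaton α R₂) : Automaton α (R × R₂) where
  init := (M₁.init, M₂.init)
  tr := fun p a =>
    match M₁.tr p.1 a, M₂.tr p.2 a with
    | some r₁, some r₂ => some (r₁, r₂)
    | _, _ => none
  marked := {p | p.1 ∈ M₁.marked ∧ p.2 ∈ M₂.marked}

/-- Bisimilarity of two automata. -/
def Bisimilar (M₁ : Automaton α R) (M₂ : Automaton α R₂) : Prop :=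
  ∃ π : R → R₂ → Prop, π M₁.init M₂.init ∧
    ∀ r₁ r₂, π r₁ r₂ → M₁.ready r₁ = M₂.ready r₂ ∧ (r₁ ∈ M₁.marked ↔ r₂ ∈ M₂.marked) ∧
      ∀ a r₁' r₂', M₁.tr r₁ a = some r₁' → M₂.tr r₂ a = some r₂' → π r₁' r₂'

end Automaton

/-- A marked acceptance specification (MAS). -/
structure MAS (α : Type) (Q : Type) where
  init : Q
  tr : Q → α → Option Q
  Acc : Q → Set (Set α)
  marked : Set Q

namespace MAS

variable {α Q Q₂ R : Type}

/-- Underlying automaton of a MAS. -/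
def Un (S : MAS α Q) : Automaton α Q := ⟨S.init, S.tr, S.marked⟩

/-- `π` is a satisfaction (simulation) relation between `M` and `S`. -/
def Sat (M : Automaton α R) (S : MAS α Q) (π : R → Q → Prop) : Prop :=
  π M.init S.init ∧ ∀ r q, π r q →
    M.ready r ∈ S.Acc q ∧ (r ∈ M.marked → q ∈ S.marked) ∧
      ∀ a r', M.tr r a = some r' → ∃ q', S.tr q a = some q' ∧ π r' q'

/-- `M ⊨ S`: `M` is a terminating automaton satisfying `S`. -/
def Models (M : Automaton α R) (S : MAS α Q) : Prop :=
  M.Terminating ∧ ∃ π, Sat M S π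

/-- `S` is attracted in `q`: a marked state is reachable from `q`. -/
def Attracted (S : MAS α Q) (q : Q) : Prop := (S.Un.post q ∩ S.marked).Nonempty

def AccConsistent (S : MAS α Q) (q : Q) : Prop := S.Acc q ≠ ∅

def FAccConsistent (S : MAS α Q) (q : Q) : Prop := ∅ ∈ S.Acc q → q ∈ S.marked

def DeltaAccConsistent (S : MAS α Q) (q : Q) : Prop :=
  ∀ a, (S.tr q a).isSome ↔ ∃ X ∈ S.Acc q, a ∈ X

/-- Normal form: attracted and consistent in every state. -/
def NormalForm (S : MAS α Q) : Prop :=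
  ∀ q, S.Attracted q ∧ S.AccConsistent q ∧ S.FAccConsistent q ∧ S.DeltaAccConsistent q

/-- `M ∼_U S`: `M` has no unnecessary transitions regarding `S`. -/
def SimU (M : Automaton α R) (S : MAS α Q) : Prop :=
  ∃ π : R → Q → Prop, π M.init S.init ∧
    ∀ r q, π r q → M.ready r ⊆ ⋃₀ S.Acc q ∧
      ∀ a r', M.tr r a = some r' → ∃ q', S.tr q a = some q' ∧ π r' q'

/-- `ρ_u(M, S)`: prune from `M` the transitions unnecessary regarding `S`. -/
noncomputable def rhoU (M : Automaton α R) (S : MAS α Q) : Automaton α (R × Q) where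
  init := (M.init, S.init)
  tr := fun p a =>
    if a ∈ ⋃₀ S.Acc p.2 then
      match M.tr p.1 a, S.tr p.2 a with
      | some r', some q' => some (r', q')
      | _, _ => none
    else none
  marked := {p | p.1 ∈ M.marked}

/-- Acceptance sets of the pre-quotient. -/
def preAcc (S₁ : MAS α Q) (S₂ : MAS α Q₂) (q₁ : Q) (q₂ : Q₂) : Set (Set α) :=
  {X | (∀ X₂ ∈ S₂.Acc q₂, X ∩ X₂ ∈ S₁.Acc q₁) ∧ X ⊆ (⋃₀ S₁.Acc q₁) ∩ (⋃₀ S₂.Acc q₂)}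

/-- The pre-quotient `S₁ // S₂`. -/
noncomputable def preQuotient (S₁ : MAS α Q) (S₂ : MAS α Q₂) : MAS α (Q × Q₂) where
  init := (S₁.init, S₂.init)
  tr := fun p a =>
    if ∃ X ∈ preAcc S₁ S₂ p.1 p.2, a ∈ X then
      match S₁.tr p.1 a, S₂.tr p.2 a with
      | some q₁', some q₂' => some (q₁', q₂')
      | _, _ => none
    else none
  Acc := fun p => preAcc S₁ S₂ p.1 p.2
  marked := {p | p.1 ∈ S₁.marked ∨ p.2 ∉ S₂.marked}

/-- The unfolding of `S₂` in relation to `S₁` (fresh state `q?` encoded as `none`). -/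
def unfoldWrt (S₁ : MAS α Q) (S₂ : MAS α Q₂) : MAS α (Option Q × Q₂) where
  init := (some S₁.init, S₂.init)
  tr := fun p a => (S₂.tr p.2 a).map (fun q₂' => (p.1.bind (fun q₁ => S₁.tr q₁ a), q₂'))
  Acc := fun p => S₂.Acc p.2
  marked := {p | p.2 ∈ S₂.marked}

/-- `q₂` is a partner of `q₁`: the pair is reachable in `Un(S₁) × Un(S₂)`. -/
def Partner (S₁ : MAS α Q) (S₂ : MAS α Q₂) (q₁ : Q) (q₂ : Q₂) : Prop :=
  (S₁.Un.prod S₂.Un).Reachable (q₁, q₂)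

/-- Domain of a cycle (a partial map represented by its nonempty values). -/
def cdom (C : Q → Set α) : Set Q := {q | C q ≠ ∅}

/-- `C` is a cycle in `S`. -/
def IsCycle (S : MAS α Q) (C : Q → Set α) : Prop :=
  ∀ q ∈ cdom C, (∃ X ∈ S.Acc q, C q ⊆ X) ∧ cdom C ⊆ S.Un.post q ∧
    ∀ a ∈ C q, ∃ q', S.tr q a = some q' ∧ q' ∈ cdom C

/-- A model `M` (via satisfaction relation `π`) implements the cycle `C`. -/
def ImplementsCycle {Q : Type} (M : Automaton α R) (π : R → Q → Prop) (C : Q → Set α) : Prop :=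
  ∃ Rs : Set R, (∀ q ∈ cdom C, ∃ r ∈ Rs, π r q) ∧
    ∀ r ∈ Rs, ∀ q, π r q → q ∈ cdom C ∧ C q ⊆ M.ready r ∧
      (∀ a ∈ C q, ∃ r', M.tr r a = some r' ∧ r' ∈ Rs) ∧
      (∀ a ∈ M.ready r \ C q, ∀ r', M.tr r a = some r' → r' ∉ Rs)

/-- `C` is an implementable cycle of `S`. -/
def ImplementableCycle (S : MAS α Q) (C : Q → Set α) : Prop :=
  IsCycle S C ∧ (cdom C).Nonempty ∧
    ((cdom C ∩ S.marked).Nonempty ∨ ∃ q ∈ cdom C, ∃ X ∈ S.Acc q, C q ⊂ X)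

/-- Compatibility of two acceptance sets. -/
def Compat (A₁ A₂ : Set (Set α)) : Prop := ∀ X₁ ∈ A₁, ∀ X₂ ∈ A₂, X₁ ∩ X₂ ≠ ∅

/-- `Dead(q₁,q₂)`: the pair of states is deadlock-free. -/
def DeadPair (S₁ : MAS α Q) (S₂ : MAS α Q₂) (q₁ : Q) (q₂ : Q₂) : Prop :=
  (S₁.Acc q₁ = {∅} ∧ S₂.Acc q₂ = {∅}) ∨ Compat (S₁.Acc q₁) (S₂.Acc q₂)

/-- Two MAS are deadlock-free. -/
def DeadlockFreeSpec (S₁ : MAS α Q) (S₂ : MAS α Q₂) : Prop :=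
  ∀ q₁ q₂, Partner S₁ S₂ q₁ q₂ → DeadPair S₁ S₂ q₁ q₂

/-- `leaving(q, A)`. -/
def leaving (S : MAS α Q) (q : Q) (A : Set α) : Set (Set α) :=
  {Y | ∃ X ∈ S.Acc q, A ⊂ X ∧ Y = X \ A}

/-- The mandatory cycle-leaving transitions `𝒜` of a cycle. -/
noncomputable def AA (S : MAS α Q) (C : Q → Set α) : Q → Set (Set α) :=
  fun q => if q ∈ cdom C ∧ C q ∉ S.Acc q then leaving S q (C q) else ∅

/-- The optional cycle-leaving transitions `𝒪` of a cycle. -/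
noncomputable def OO (S : MAS α Q) (C : Q → Set α) : Q → Set (Set α) :=
  fun q => if q ∈ cdom C ∧ C q ∈ S.Acc q then leaving S q (C q) else ∅

/-- The cycle of `S₂` paired with a cycle `C₁` of `S₁` (`C₂(Q₂(q)) = C₁(q)`). -/
def partnerCycle (S₁ : MAS α Q) (S₂ : MAS α Q₂) (C₁ : Q → Set α) : Q₂ → Set α :=
  fun q₂ => ⋃ q₁ ∈ {q₁ | Partner S₁ S₂ q₁ q₂}, C₁ q₁

/-- `Live(C₁, S₂)`: the cycle `C₁` of `S₁` is livelock-free in relation to `S₂`. -/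
noncomputable def Live (S₁ : MAS α Q) (S₂ : MAS α Q₂) (C₁ : Q → Set α) : Prop :=
  ImplementableCycle S₂ (partnerCycle S₁ S₂ C₁) →
    (({q₁ | AA S₁ C₁ q₁ ≠ ∅}.Nonempty ∧ {q₂ | AA S₂ (partnerCycle S₁ S₂ C₁) q₂ ≠ ∅}.Nonempty ∧
        ∃ q₁', AA S₁ C₁ q₁' ≠ ∅ ∧ ∃ q₂', Partner S₁ S₂ q₁' q₂' ∧
          AA S₂ (partnerCycle S₁ S₂ C₁) q₂' ≠ ∅ ∧
          Compat (AA S₁ C₁ q₁') (AA S₂ (partnerCycle S₁ S₂ C₁) q₂')) ∨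
      ({q₁ | AA S₁ C₁ q₁ ≠ ∅}.Nonempty ∧ (∀ q₂', AA S₂ (partnerCycle S₁ S₂ C₁) q₂' = ∅) ∧
        cdom (partnerCycle S₁ S₂ C₁) ∩ S₂.marked = ∅ ∧
        ∀ q₂', OO S₂ (partnerCycle S₁ S₂ C₁) q₂' ≠ ∅ →
          ∃ q₁', Partner S₁ S₂ q₁' q₂' ∧ AA S₁ C₁ q₁' ≠ ∅ ∧
            Compat (AA S₁ C₁ q₁') (OO S₂ (partnerCycle S₁ S₂ C₁) q₂')) ∨
      ((∀ q₁', AA S₁ C₁ q₁' = ∅) ∧ {q₂ | AA S₂ (partnerCycle S₁ S₂ C₁) q₂ ≠ ∅}.Nonempty ∧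
        cdom C₁ ∩ S₁.marked = ∅ ∧
        ∀ q₁', OO S₁ C₁ q₁' ≠ ∅ →
          ∃ q₂', Partner S₁ S₂ q₁' q₂' ∧ AA S₂ (partnerCycle S₁ S₂ C₁) q₂' ≠ ∅ ∧
            Compat (OO S₁ C₁ q₁') (AA S₂ (partnerCycle S₁ S₂ C₁) q₂')))

/-- Two MAS (with single partners) are livelock-free. -/
noncomputable def LivelockFreeSpec (S₁ : MAS α Q) (S₂ : MAS α Q₂) : Prop :=
  ∀ C₁ : Q → Set α, ImplementableCycle S₁ C₁ →
    (∀ q₁ ∈ cdom C₁, ∃ q₂, Partner S₁ S₂ q₁ q₂) → Live S₁ S₂ C₁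

/-- `S₁ ∼_T S₂`: compatible reachability — deadlock-free, and the unfoldings are
livelock-free (`S₁'` is the unfolding of `S₁` in relation to `S₂`, and `S₂'` the
unfolding of `S₂` in relation to `S₁'`). -/
noncomputable def CompatReach (S₁ : MAS α Q) (S₂ : MAS α Q₂) : Prop :=
  DeadlockFreeSpec S₁ S₂ ∧
    LivelockFreeSpec (unfoldWrt S₂ S₁) (unfoldWrt (unfoldWrt S₂ S₁) S₂)

end MAS

/-- a related state with empty ready set forces `q ∈ F` and `∅ ∈ Acc(q)`;
hence removing `∅` from acceptance sets of unmarked states preserves the set of models. -/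
theorem stmt1 {α Q : Type} (S : MAS α Q) :
    (∀ (R : Type) (M : Automaton α R) (π : R → Q → Prop) (r : R) (q : Q),
      M.Terminating → MAS.Sat M S π → π r q → M.ready r = ∅ →
        q ∈ S.marked ∧ ∅ ∈ S.Acc q) ∧
    (∀ (R : Type) (M : Automaton α R),
      MAS.Models M S ↔
        MAS.Models M { S with Acc := fun q => {X ∈ S.Acc q | X = ∅ → q ∈ S.marked} }) := by
  have key : ∀ (R : Type) (M : Automaton α R) (π : R → Q → Prop) (r : R) (q : Q),
      M.Terminating → MAS.Sat M S π → π r q → M.ready r = ∅ →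
        q ∈ S.marked ∧ ∅ ∈ S.Acc q := by
    intro R M π r q hT hSat hπ hready
    obtain ⟨hrm⟩ : r ∈ M.marked ∧ True := by
      constructor
      · by_contra h
        exact hT.1 r ⟨h, hready⟩
      · trivial
    obtain ⟨hacc, hmark, _⟩ := hSat.2 r q hπ
    exact ⟨hmark hrm, hready ▸ hacc⟩
  refine ⟨key, fun R M => ⟨?_, ?_⟩⟩
  · rintro ⟨hT, π, hSat⟩
    refine ⟨hT, π, hSat.1, fun r q hπ => ?_⟩
    obtain ⟨hacc, hmark, htr⟩ := hSat.2 r q hπ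
    refine ⟨⟨hacc, fun h => ?_⟩, hmark, htr⟩
    exact (key R M π r q hT hSat hπ h).1
  · rintro ⟨hT, π, hSat⟩
    refine ⟨hT, π, hSat.1, fun r q hπ => ?_⟩
    obtain ⟨hacc, hmark, htr⟩ := hSat.2 r q hπ
    exact ⟨hacc.1, hmark, htr⟩
end

section
/- The pre-quotient is correct: for MAS S₁ and S₂, if M ⊨ S₁ // S₂ then for every M₂ ⊨ S₂ such that M × M₂ is terminating, M × M₂ ⊨ S₁. -/
attribute [local instance] Classical.propDecidable

/-- correctness of the pre-quotient. -/
theorem stmt4 {α Q₁ Q₂ R R₂ : Type} (S₁ : MAS α Q₁) (S₂ : MAS α Q₂)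
    (M : Automaton α R) (hM : MAS.Models M (MAS.preQuotient S₁ S₂))
    (M₂ : Automaton α R₂) (h₂ : MAS.Models M₂ S₂)
    (hterm : (M.prod M₂).Terminating) :
    MAS.Models (M.prod M₂) S₁ := by
  obtain ⟨_, π, hπ0, hπ⟩ := hM
  obtain ⟨_, π₂, hπ₂0, hπ₂⟩ := h₂
  refine ⟨hterm, fun p q₁ => ∃ q₂, π p.1 (q₁, q₂) ∧ π₂ p.2 q₂, ⟨S₂.init, hπ0, hπ₂0⟩, ?_⟩
  rintro ⟨r, r₂⟩ q₁ ⟨q₂, hr, hr₂⟩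
  obtain ⟨hready, hmark, htr⟩ := hπ _ _ hr
  obtain ⟨hready₂, hmark₂, htr₂⟩ := hπ₂ _ _ hr₂
  have hreadyprod : (M.prod M₂).ready (r, r₂) = M.ready r ∩ M₂.ready r₂ := by
    ext a
    simp only [Automaton.ready, Automaton.prod, Set.mem_setOf_eq, Set.mem_inter_iff]
    cases h1 : M.tr r a <;> cases h2 : M₂.tr r₂ a <;> simp [h1, h2, Option.isSome]
  refine ⟨?_, ?_, ?_⟩
  · rw [hreadyprod]
    exact hready.1 _ hready₂
  · rintro ⟨hrm, hr₂m⟩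
    rcases hmark hrm with h | h
    · exact h
    · exact absurd (hmark₂ hr₂m) h
  · rintro a ⟨r', r₂'⟩ htrp
    have h1 : ∃ x, M.tr r a = some x ∧ ∃ y, M₂.tr r₂ a = some y ∧ x = r' ∧ y = r₂' := by
      simp only [Automaton.prod] at htrp
      cases h1 : M.tr r a <;> cases h2 : M₂.tr r₂ a <;> simp [h1, h2] at htrp
      exact ⟨_, rfl, _, rfl, htrp.1, htrp.2⟩
    obtain ⟨x, hx, y, hy, rfl, rfl⟩ := h1
    obtain ⟨p', hq', hπ'⟩ := htr a _ hx
    obtain ⟨q₂'', hq₂'', hπ₂''⟩ := htr₂ a _ hy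
    -- analyze preQuotient transition
    simp only [MAS.preQuotient] at hq'
    have : ∃ x₁, S₁.tr q₁ a = some x₁ ∧ ∃ x₂, S₂.tr q₂ a = some x₂ ∧ p' = (x₁, x₂) := by
      split at hq'
      · cases h1 : S₁.tr q₁ a <;> cases h2 : S₂.tr q₂ a <;> simp [h1, h2] at hq'
        exact ⟨_, rfl, _, rfl, hq'.symm⟩
      · exact absurd hq' (by simp)
    obtain ⟨x₁, hx₁, x₂, hx₂, rfl⟩ := this
    refine ⟨x₁, hx₁, x₂, hπ', ?_⟩
    rw [hx₂] at hq₂''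
    cases Option.some_injective _ hq₂''
    exact hπ₂''
end

section
/- Key step of pre-quotient correctness: if π_// witnesses M ⊨ S₁ // S₂ and π₂ witnesses M₂ ⊨ S₂, then the relation π with ((r,r₂), q₁) ∈ π iff ∃ q₂ with (r₂,q₂) ∈ π₂ and (r,(q₁,q₂)) ∈ π_//, satisfies ready((r,r₂)) = ready(r) ∩ ready(r₂) ∈ Acc₁(q₁) for every ((r,r₂), q₁) ∈ π. -/
attribute [local instance] Classical.propDecidable

/-- key step of pre-quotient correctness: the composed relation `π`
satisfies `ready((r,r₂)) = ready(r) ∩ ready(r₂) ∈ Acc₁(q₁)`. -/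
theorem stmt5 {α Q₁ Q₂ R R₂ : Type} (S₁ : MAS α Q₁) (S₂ : MAS α Q₂)
    (M : Automaton α R) (M₂ : Automaton α R₂)
    (πq : R → Q₁ × Q₂ → Prop) (π₂ : R₂ → Q₂ → Prop)
    (h₁ : MAS.Sat M (MAS.preQuotient S₁ S₂) πq) (h₂ : MAS.Sat M₂ S₂ π₂) :
    ∀ (r : R) (r₂ : R₂) (q₁ : Q₁),
      (∃ q₂, π₂ r₂ q₂ ∧ πq r (q₁, q₂)) →
        (M.prod M₂).ready (r, r₂) = M.ready r ∩ M₂.ready r₂ ∧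
        (M.prod M₂).ready (r, r₂) ∈ S₁.Acc q₁ := by
  rintro r r₂ q₁ ⟨q₂, hπ₂, hπq⟩
  have hready : (M.prod M₂).ready (r, r₂) = M.ready r ∩ M₂.ready r₂ := by
    ext a
    simp only [Automaton.ready, Automaton.prod, Set.mem_setOf_eq, Set.mem_inter_iff]
    constructor
    · intro h
      cases h1 : M.tr r a <;> cases h2 : M₂.tr r₂ a <;>
        simp [h1, h2] at h ⊢
    · rintro ⟨ha1, ha2⟩
      obtain ⟨x1, h1⟩ := Option.isSome_iff_exists.mp ha1
      obtain ⟨x2, h2⟩ := Option.isSome_iff_exists.mp ha2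
      simp [h1, h2]
  refine ⟨hready, ?_⟩
  have hA := (h₁.2 r (q₁, q₂) hπq).1
  have hB := (h₂.2 r₂ q₂ hπ₂).1
  have hAcc : M.ready r ∩ M₂.ready r₂ ∈ S₁.Acc q₁ := hA.1 _ hB
  rw [hready]; exact hAcc
end

section
/- For any automaton M and MAS S, the pruned automaton ρ_u(M, S) has no unnecessary transitions regarding S: ρ_u(M, S) ∼_U S. -/
attribute [local instance] Classical.propDecidable

/-- `ρ_u(M, S)` has no unnecessary transitions regarding `S`. -/
theorem stmt6 {α Q R : Type} (M : Automaton α R) (S : MAS α Q) :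
    MAS.SimU (MAS.rhoU M S) S := by
  refine ⟨fun p q => p.2 = q, rfl, ?_⟩
  rintro ⟨r, q⟩ q' (rfl : q = q')
  constructor
  · intro a ha
    simp only [Automaton.ready, MAS.rhoU, Set.mem_setOf_eq] at ha
    by_contra h
    rw [if_neg h] at ha
    simp at ha
  · intro a ⟨r', q''⟩ h
    simp only [MAS.rhoU] at h
    split_ifs at h
    cases hM : M.tr r a <;> cases hS : S.tr q a <;> rw [hM, hS] at h <;> simp at h
    exact ⟨_, rfl, h.2.symm⟩
end

section
/- For any automaton M, MAS S, and any model M_S ⊨ S, the products M × M_S and ρ_u(M, S) × M_S are bisimilar. -/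
attribute [local instance] Classical.propDecidable

/-- for every model `M_S ⊨ S`, the products `M × M_S` and
`ρ_u(M, S) × M_S` are bisimilar. -/
theorem stmt7 {α Q R Rs : Type} (M : Automaton α R) (S : MAS α Q)
    (MS : Automaton α Rs) (hMS : MAS.Models MS S) :
    Automaton.Bisimilar (M.prod MS) ((MAS.rhoU M S).prod MS) := by
  obtain ⟨-, π, hπ0, hπ⟩ := hMS
  refine ⟨fun p p' => p.1 = p'.1.1 ∧ p.2 = p'.2 ∧ π p.2 p'.1.2, ⟨rfl, rfl, hπ0⟩, ?_⟩
  rintro ⟨r, rs⟩ ⟨⟨r', q⟩, rs'⟩ ⟨h1, h2, hq⟩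
  dsimp only at h1 h2 hq
  subst h1; subst h2
  obtain ⟨hacc, hmark, hstep⟩ := hπ rs q hq
  have key : ∀ a rs₀, MS.tr rs a = some rs₀ →
      a ∈ ⋃₀ S.Acc q ∧ ∃ q', S.tr q a = some q' := by
    intro a rs₀ h
    obtain ⟨q', hq', -⟩ := hstep a rs₀ h
    exact ⟨⟨MS.ready rs, hacc, by simp [Automaton.ready, h]⟩, q', hq'⟩
  refine ⟨?_, ?_, ?_⟩
  · ext a
    simp only [Automaton.ready, Automaton.prod, MAS.rhoU, Set.mem_setOf_eq]
    constructor
    · intro h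
      cases hm : M.tr r a with
      | none => simp [hm] at h
      | some rM =>
        cases hs : MS.tr rs a with
        | none => simp [hm, hs] at h
        | some rS =>
          obtain ⟨ha, q', hq'⟩ := key a rS hs
          simp [hm, hs, ha, hq']
    · intro h
      cases hm : M.tr r a with
      | none => simp [hm] at h
      | some rM =>
        cases hs : MS.tr rs a with
        | none => simp [hm, hs] at h
        | some rS => simp [hm, hs]
  · simp [Automaton.prod, MAS.rhoU]
  · rintro a ⟨r₁, rs₁⟩ ⟨⟨r₂, q₂⟩, rs₂⟩ h₁ h₂
    simp only [Automaton.prod, MAS.rhoU] at h₁ h₂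
    cases hm : M.tr r a with
    | none => simp [hm] at h₁
    | some rM =>
      cases hs : MS.tr rs a with
      | none => simp [hm, hs] at h₁
      | some rS =>
        simp only [hm, hs, Option.some.injEq, Prod.mk.injEq] at h₁
        obtain ⟨rfl, rfl⟩ := h₁
        obtain ⟨ha, q', hq'⟩ := key a rS hs
        obtain ⟨q'', hq'', hπ'⟩ := hstep a rS hs
        rw [hq'] at hq''
        cases hq''
        simp only [hm, hq', ha, if_pos, hs, Option.some.injEq, Prod.mk.injEq] at h₂
        obtain ⟨⟨rfl, rfl⟩, rfl⟩ := h₂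
        exact ⟨rfl, rfl, hπ'⟩
end

section
/- Completeness of the pre-quotient: given MAS S₁ and S₂ (in normal form) and an automaton M with M ∼_U S₂ such that for all M₂ ⊨ S₂ one has M × M₂ ⊨ S₁, then M ⊨ S₁ // S₂. -/
attribute [local instance] Classical.propDecidable

section Stmt8Aux

open MAS Automaton

variable {α Q₂ : Type}

/-- Reach a marked state of `S₂` in at most `n` steps. -/
def withinN (S₂ : MAS α Q₂) : ℕ → Q₂ → Prop
  | 0, q => q ∈ S₂.marked
  | (n+1), q => q ∈ S₂.marked ∨ ∃ a q', S₂.tr q a = some q' ∧ withinN S₂ n q'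

lemma exists_withinN (S₂ : MAS α Q₂) (hn₂ : S₂.NormalForm) (q : Q₂) :
    ∃ n, withinN S₂ n q := by
  obtain ⟨m, hm1, hm2⟩ := (hn₂ q).1
  have : ∀ x, Relation.ReflTransGen S₂.Un.step x m → ∃ n, withinN S₂ n x := by
    intro x hx
    induction hx using Relation.ReflTransGen.head_induction_on with
    | refl => exact ⟨0, hm2⟩
    | head hstep _ ih =>
      obtain ⟨n, hn⟩ := ih
      obtain ⟨a, ha⟩ := hstep
      exact ⟨n + 1, Or.inr ⟨a, _, ha, hn⟩⟩
  exact this q hm1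

/-- Distance to a marked state. -/
noncomputable def dist (S₂ : MAS α Q₂) (hn₂ : S₂.NormalForm) (q : Q₂) : ℕ :=
  Nat.find (exists_withinN S₂ hn₂ q)

lemma exists_good (S₂ : MAS α Q₂) (hn₂ : S₂.NormalForm) (q : Q₂) :
    ∃ X ∈ S₂.Acc q, q ∉ S₂.marked →
      ∃ a ∈ X, ∃ q', S₂.tr q a = some q' ∧ dist S₂ hn₂ q' < dist S₂ hn₂ q := by
  by_cases hq : q ∈ S₂.marked
  · obtain ⟨X, hX⟩ := Set.nonempty_iff_ne_empty.2 (hn₂ q).2.1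
    exact ⟨X, hX, fun h => absurd hq h⟩
  · have hspec : withinN S₂ (dist S₂ hn₂ q) q := Nat.find_spec (exists_withinN S₂ hn₂ q)
    have hne : dist S₂ hn₂ q ≠ 0 := by
      intro h0
      rw [h0] at hspec
      exact hq hspec
    obtain ⟨n, hn⟩ : ∃ n, dist S₂ hn₂ q = n + 1 := ⟨_, (Nat.succ_pred_eq_of_pos (Nat.pos_of_ne_zero hne)).symm⟩
    rw [hn] at hspec
    rcases hspec with hmk | ⟨a, q', htr, hw⟩
    · exact absurd hmk hq
    · have hds : dist S₂ hn₂ q' ≤ n := Nat.find_le hw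
      have hsome : (S₂.tr q a).isSome := by rw [htr]; rfl
      obtain ⟨X, hX, haX⟩ := ((hn₂ q).2.2.2 a).1 hsome
      exact ⟨X, hX, fun _ => ⟨a, haX, q', htr, by omega⟩⟩

/-- Canonical "good" acceptance choice. -/
noncomputable def X0 (S₂ : MAS α Q₂) (hn₂ : S₂.NormalForm) (q : Q₂) : Set α :=
  (exists_good S₂ hn₂ q).choose

lemma X0_mem (S₂ : MAS α Q₂) (hn₂ : S₂.NormalForm) (q : Q₂) :
    X0 S₂ hn₂ q ∈ S₂.Acc q := (exists_good S₂ hn₂ q).choose_spec.1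

lemma X0_good (S₂ : MAS α Q₂) (hn₂ : S₂.NormalForm) (q : Q₂) (hq : q ∉ S₂.marked) :
    ∃ a ∈ X0 S₂ hn₂ q, ∃ q', S₂.tr q a = some q' ∧ dist S₂ hn₂ q' < dist S₂ hn₂ q :=
  (exists_good S₂ hn₂ q).choose_spec.2 hq

/-- Current instruction of a list state. -/
noncomputable def hdI (S₂ : MAS α Q₂) (hn₂ : S₂.NormalForm) (q : Q₂) (l : List (Set α)) :
    Set α :=
  match l with
  | [] => X0 S₂ hn₂ q
  | X :: _ => if X ∈ S₂.Acc q then X else X0 S₂ hn₂ q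

lemma hdI_mem (S₂ : MAS α Q₂) (hn₂ : S₂.NormalForm) (q : Q₂) (l : List (Set α)) :
    hdI S₂ hn₂ q l ∈ S₂.Acc q := by
  cases l with
  | nil => exact X0_mem S₂ hn₂ q
  | cons X l =>
    simp only [hdI]
    split
    · assumption
    · exact X0_mem S₂ hn₂ q

lemma hdI_cons (S₂ : MAS α Q₂) (hn₂ : S₂.NormalForm) (q : Q₂) (X : Set α)
    (l : List (Set α)) (hX : X ∈ S₂.Acc q) : hdI S₂ hn₂ q (X :: l) = X := by
  simp only [hdI, if_pos hX]

/-- The universal model family of `S₂`: instruction list, then canonical behaviour,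
plus a universal marked state `none`. -/
noncomputable def MM (S₂ : MAS α Q₂) (hn₂ : S₂.NormalForm) (L : List (Set α)) :
    Automaton α (Option (Q₂ × List (Set α))) where
  init := some (S₂.init, L)
  tr := fun s a =>
    match s with
    | none => some none
    | some (q, l) =>
        if a ∈ hdI S₂ hn₂ q l then
          match S₂.tr q a with
          | some q' => some (some (q', l.tail))
          | none => none
        else none
  marked := {s | ∀ q l, s = some (q, l) → q ∈ S₂.marked}

variable (S₂ : MAS α Q₂) (hn₂ : S₂.NormalForm) (L : List (Set α))

lemma MM_tr_none (a : α) : (MM S₂ hn₂ L).tr none a = some none := rfl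

lemma MM_tr_some_iff (q : Q₂) (l : List (Set α)) (a : α) (s : Option (Q₂ × List (Set α))) :
    (MM S₂ hn₂ L).tr (some (q, l)) a = some s ↔
      a ∈ hdI S₂ hn₂ q l ∧ ∃ q', S₂.tr q a = some q' ∧ s = some (q', l.tail) := by
  simp only [MM]
  by_cases ha : a ∈ hdI S₂ hn₂ q l
  · rw [if_pos ha]
    cases htr : S₂.tr q a with
    | none => simp [htr, ha]
    | some q' => simp [htr, ha, eq_comm]
  · rw [if_neg ha]
    simp [ha]

lemma MM_ready_some (q : Q₂) (l : List (Set α)) :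
    (MM S₂ hn₂ L).ready (some (q, l)) = hdI S₂ hn₂ q l := by
  ext a
  simp only [Automaton.ready, Set.mem_setOf_eq, Option.isSome_iff_exists]
  constructor
  · rintro ⟨s, hs⟩
    exact ((MM_tr_some_iff S₂ hn₂ L q l a s).1 hs).1
  · intro ha
    have hsome : (S₂.tr q a).isSome :=
      ((hn₂ q).2.2.2 a).2 ⟨_, hdI_mem S₂ hn₂ q l, ha⟩
    obtain ⟨q', hq'⟩ := Option.isSome_iff_exists.1 hsome
    exact ⟨some (q', l.tail), (MM_tr_some_iff S₂ hn₂ L q l a _).2 ⟨ha, q', hq', rfl⟩⟩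

lemma MM_marked_none : (none : Option (Q₂ × List (Set α))) ∈ (MM S₂ hn₂ L).marked := by
  intro q l h
  exact absurd h (by simp)

lemma MM_marked_some_iff (q : Q₂) (l : List (Set α)) :
    some (q, l) ∈ (MM S₂ hn₂ L).marked ↔ q ∈ S₂.marked := by
  constructor
  · intro h; exact h q l rfl
  · intro h q' l' he
    obtain ⟨rfl, rfl⟩ : q = q' ∧ l = l' := by
      simpa [Prod.ext_iff] using he
    exact h

/-- Measure: remaining instruction length. -/
def mu : Option (Q₂ × List (Set α)) → ℕ
  | none => 0
  | some (_, l) => l.length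

lemma step_mu {x y : Option (Q₂ × List (Set α))} (hstep : (MM S₂ hn₂ L).step x y) :
    mu y ≤ mu x ∧ (0 < mu x → mu y < mu x) := by
  obtain ⟨a, ha⟩ := hstep
  cases x with
  | none =>
    rw [MM_tr_none] at ha
    obtain rfl : y = none := by simpa using ha.symm
    simp [mu]
  | some p =>
    obtain ⟨q, l⟩ := p
    obtain ⟨-, q', -, rfl⟩ := (MM_tr_some_iff S₂ hn₂ L q l a y).1 ha
    cases l with
    | nil => simp [mu]
    | cons X l' => simp [mu]

lemma rtg_mu {x y : Option (Q₂ × List (Set α))}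
    (hr : Relation.ReflTransGen (MM S₂ hn₂ L).step x y) : mu y ≤ mu x := by
  induction hr with
  | refl => exact le_refl _
  | tail _ hstep ih => exact le_trans (step_mu S₂ hn₂ L hstep).1 ih

lemma cyc_mu_zero {x : Option (Q₂ × List (Set α))}
    (hc : Relation.TransGen (MM S₂ hn₂ L).step x x) : mu x = 0 := by
  obtain ⟨z, hxz, hzx⟩ := Relation.TransGen.head'_iff.1 hc
  by_contra h0
  have h1 : mu z < mu x := (step_mu S₂ hn₂ L hxz).2 (Nat.pos_of_ne_zero h0)
  have h2 : mu x ≤ mu z := rtg_mu S₂ hn₂ L hzx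
  omega

lemma MM_cyc_shape {s x : Option (Q₂ × List (Set α))}
    (hx : x ∈ (MM S₂ hn₂ L).Cyc s) (hmk : (MM S₂ hn₂ L).marked ∩ (MM S₂ hn₂ L).Cyc s = ∅) :
    ∃ q, x = some (q, ([] : List (Set α))) := by
  cases x with
  | none =>
    exact absurd (Set.mem_inter (MM_marked_none S₂ hn₂ L) hx) (by rw [hmk]; simp)
  | some p =>
    obtain ⟨q, l⟩ := p
    refine ⟨q, ?_⟩
    have hxx : Relation.TransGen (MM S₂ hn₂ L).step (some (q, l)) (some (q, l)) :=
      hx.1.trans hx.2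
    have := cyc_mu_zero S₂ hn₂ L hxx
    simp only [mu, List.length_eq_zero_iff] at this
    rw [this]

lemma MM_terminating : (MM S₂ hn₂ L).Terminating := by
  constructor
  · rintro s ⟨hmk, hready⟩
    cases s with
    | none => exact hmk (MM_marked_none S₂ hn₂ L)
    | some p =>
      obtain ⟨q, l⟩ := p
      have hq : q ∉ S₂.marked := fun hq => hmk ((MM_marked_some_iff S₂ hn₂ L q l).2 hq)
      rw [MM_ready_some] at hready
      have : (∅ : Set α) ∈ S₂.Acc q := hready ▸ hdI_mem S₂ hn₂ q l
      exact hq ((hn₂ q).2.2.1 this)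
  · rintro s ⟨⟨x, hx⟩, hmk, hexit⟩
    -- all cycle states are of the form some (q, [])
    have hshape : ∀ y ∈ (MM S₂ hn₂ L).Cyc s, ∃ q, y = some (q, ([] : List (Set α))) :=
      fun y hy => MM_cyc_shape S₂ hn₂ L hy hmk
    obtain ⟨qx, rfl⟩ := hshape x hx
    set D : Set ℕ := {n | ∃ q, some (q, ([] : List (Set α))) ∈ (MM S₂ hn₂ L).Cyc s ∧
      dist S₂ hn₂ q = n} with hD
    have hDne : D.Nonempty := ⟨_, qx, hx, rfl⟩
    obtain ⟨q0, hq0cyc, hq0d⟩ := Nat.sInf_mem hDne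
    have hq0mk : q0 ∉ S₂.marked := by
      intro hmem
      have : some (q0, ([] : List (Set α))) ∈ (MM S₂ hn₂ L).marked ∩ (MM S₂ hn₂ L).Cyc s :=
        ⟨(MM_marked_some_iff S₂ hn₂ L q0 []).2 hmem, hq0cyc⟩
      rw [hmk] at this
      exact this
    obtain ⟨a, haX, q', htr, hlt⟩ := X0_good S₂ hn₂ q0 hq0mk
    have hedge : (MM S₂ hn₂ L).tr (some (q0, [])) a = some (some (q', [])) :=
      (MM_tr_some_iff S₂ hn₂ L q0 [] a _).2 ⟨haX, q', htr, rfl⟩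
    have hq'cyc : some (q', ([] : List (Set α))) ∈ (MM S₂ hn₂ L).Cyc s := by
      by_contra hne
      exact hexit ⟨_, a, _, hedge, hq0cyc, hne⟩
    have : dist S₂ hn₂ q' ∈ D := ⟨q', hq'cyc, rfl⟩
    have := Nat.sInf_le this
    omega

lemma MM_models : MAS.Models (MM S₂ hn₂ L) S₂ := by
  refine ⟨MM_terminating S₂ hn₂ L, fun s q => ∃ l, s = some (q, l), ⟨L, rfl⟩, ?_⟩
  rintro s q ⟨l, rfl⟩
  refine ⟨?_, ?_, ?_⟩
  · rw [MM_ready_some]; exact hdI_mem S₂ hn₂ q l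
  · intro hmem; exact (MM_marked_some_iff S₂ hn₂ L q l).1 hmem
  · intro a s' hs'
    obtain ⟨-, q', hq', rfl⟩ := (MM_tr_some_iff S₂ hn₂ L q l a s').1 hs'
    exact ⟨q', hq', l.tail, rfl⟩

section Prod
variable {R R₂' : Type} (M₁ : Automaton α R) (N : Automaton α R₂')

lemma prod_tr_iff (p : R × R₂') (a : α) (p' : R × R₂') :
    (M₁.prod N).tr p a = some p' ↔ M₁.tr p.1 a = some p'.1 ∧ N.tr p.2 a = some p'.2 := by
  simp only [Automaton.prod]
  cases h1 : M₁.tr p.1 a with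
  | none => simp [h1]
  | some r1 =>
    cases h2 : N.tr p.2 a with
    | none => simp
    | some r2 =>
      constructor
      · intro h; obtain rfl : p' = (r1, r2) := by simpa using h.symm
        exact ⟨rfl, rfl⟩
      · rintro ⟨ha, hb⟩
        obtain rfl := Option.some_injective _ ha
        obtain rfl := Option.some_injective _ hb
        rfl

lemma prod_ready (r : R) (s : R₂') :
    (M₁.prod N).ready (r, s) = M₁.ready r ∩ N.ready s := by
  ext a
  simp only [Automaton.ready, Set.mem_setOf_eq, Set.mem_inter_iff, Option.isSome_iff_exists]
  constructor
  · rintro ⟨p', hp'⟩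
    have := (prod_tr_iff M₁ N (r, s) a p').1 hp'
    exact ⟨⟨p'.1, this.1⟩, ⟨p'.2, this.2⟩⟩
  · rintro ⟨⟨r', hr'⟩, ⟨s', hs'⟩⟩
    exact ⟨(r', s'), (prod_tr_iff M₁ N (r, s) a (r', s')).2 ⟨hr', hs'⟩⟩

lemma prod_marked_iff (r : R) (s : R₂') :
    (r, s) ∈ (M₁.prod N).marked ↔ r ∈ M₁.marked ∧ s ∈ N.marked := Iff.rfl

end Prod

section Part1
variable {R : Type} (M : Automaton α R)

lemma MM_tr_eq_none_imp {s : Option (Q₂ × List (Set α))} {a : α}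
    (h : (MM S₂ hn₂ L).tr s a = some none) : s = none := by
  cases s with
  | none => rfl
  | some p =>
    obtain ⟨q, l⟩ := p
    obtain ⟨-, q', -, he⟩ := (MM_tr_some_iff S₂ hn₂ L q l a none).1 h
    exact absurd he (by simp)

lemma prodMM_tr_none_iff (x : R) (a : α) (p' : R × Option (Q₂ × List (Set α))) :
    (M.prod (MM S₂ hn₂ L)).tr (x, none) a = some p' ↔ M.tr x a = some p'.1 ∧ p'.2 = none := by
  rw [prod_tr_iff]
  simp [MM_tr_none, eq_comm]

lemma prodMM_rtg_none {p p' : R × Option (Q₂ × List (Set α))}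
    (hr : Relation.ReflTransGen (M.prod (MM S₂ hn₂ L)).step p p') (h2 : p'.2 = none) :
    p.2 = none := by
  induction hr using Relation.ReflTransGen.head_induction_on with
  | refl => exact h2
  | head hstep _ ih =>
    obtain ⟨a, ha⟩ := hstep
    have := (prod_tr_iff M (MM S₂ hn₂ L) _ a _).1 ha
    rw [ih] at this
    exact MM_tr_eq_none_imp S₂ hn₂ L this.2

lemma prodMM_lift {x y : R} (h : Relation.TransGen M.step x y) :
    Relation.TransGen (M.prod (MM S₂ hn₂ L)).step (x, none) (y, none) := by
  induction h with
  | single hs =>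
    obtain ⟨a, ha⟩ := hs
    exact Relation.TransGen.single ⟨a, (prodMM_tr_none_iff S₂ hn₂ L M _ a (_, none)).2 ⟨ha, rfl⟩⟩
  | tail _ hs ih =>
    obtain ⟨a, ha⟩ := hs
    exact ih.tail ⟨a, (prodMM_tr_none_iff S₂ hn₂ L M _ a (_, none)).2 ⟨ha, rfl⟩⟩

lemma prodMM_proj {x : R} {p : R × Option (Q₂ × List (Set α))}
    (h : Relation.TransGen (M.prod (MM S₂ hn₂ L)).step (x, none) p) :
    Relation.TransGen M.step x p.1 ∧ p.2 = none := by
  induction h with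
  | single hs =>
    obtain ⟨a, ha⟩ := hs
    have := (prodMM_tr_none_iff S₂ hn₂ L M x a _).1 ha
    exact ⟨Relation.TransGen.single ⟨a, this.1⟩, this.2⟩
  | tail _ hs ih =>
    obtain ⟨a, ha⟩ := hs
    have h2 := (prod_tr_iff M (MM S₂ hn₂ L) _ a _).1 ha
    rw [ih.2, MM_tr_none] at h2
    have hc2 : _ = none := (Option.some_injective _ h2.2).symm
    exact ⟨ih.1.tail ⟨a, h2.1⟩, hc2⟩

lemma prodMM_cyc (r : R) (p : R × Option (Q₂ × List (Set α))) :
    p ∈ (M.prod (MM S₂ hn₂ L)).Cyc (r, none) ↔ p.1 ∈ M.Cyc r ∧ p.2 = none := by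
  constructor
  · rintro ⟨h1, h2⟩
    have hp2 : p.2 = none :=
      prodMM_rtg_none S₂ hn₂ L M h1.to_reflTransGen rfl
    obtain ⟨x, z⟩ := p
    obtain rfl : z = none := hp2
    exact ⟨⟨(prodMM_proj S₂ hn₂ L M (x := x) (p := (r, none)) h1).1,
      (prodMM_proj S₂ hn₂ L M h2).1⟩, rfl⟩
  · rintro ⟨⟨h1, h2⟩, hp2⟩
    obtain ⟨x, z⟩ := p
    obtain rfl : z = none := hp2
    exact ⟨prodMM_lift S₂ hn₂ L M h1, prodMM_lift S₂ hn₂ L M h2⟩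

lemma terminating_M (hterm : (M.prod (MM S₂ hn₂ L)).Terminating) : M.Terminating := by
  obtain ⟨hdl, hll⟩ := hterm
  constructor
  · rintro r ⟨hmk, hready⟩
    refine hdl (r, none) ⟨?_, ?_⟩
    · rw [prod_marked_iff]; rintro ⟨h1, -⟩; exact hmk h1
    · rw [prod_ready, hready]; simp
  · rintro r ⟨⟨x, hx⟩, hmk, hexit⟩
    refine hll (r, none) ⟨⟨(x, none), ?_⟩, ?_, ?_⟩
    · exact (prodMM_cyc S₂ hn₂ L M r (x, none)).2 ⟨hx, rfl⟩
    · ext p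
      simp only [Set.mem_inter_iff, Set.mem_empty_iff_false, iff_false, not_and]
      intro hpm hpc
      obtain ⟨hc1, hc2⟩ := (prodMM_cyc S₂ hn₂ L M r p).1 hpc
      have : p.1 ∈ M.marked ∩ M.Cyc r := ⟨(hpm : _ ∧ _).1, hc1⟩
      rw [hmk] at this
      exact this
    · rintro ⟨p, a, p', htr, hpc, hp'c⟩
      obtain ⟨hc1, hc2⟩ := (prodMM_cyc S₂ hn₂ L M r p).1 hpc
      obtain ⟨x0, z0⟩ := p
      obtain rfl : z0 = none := hc2
      have := (prodMM_tr_none_iff S₂ hn₂ L M x0 a p').1 htr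
      apply hexit
      refine ⟨x0, a, p'.1, this.1, hc1, ?_⟩
      intro hcontra
      exact hp'c ((prodMM_cyc S₂ hn₂ L M r p').2 ⟨hcontra, this.2⟩)

end Part1

end Stmt8Aux

/-- completeness of the pre-quotient (for automata without
unnecessary transitions, specifications in normal form). -/
theorem stmt8 {α Q₁ Q₂ R : Type} (S₁ : MAS α Q₁) (S₂ : MAS α Q₂)
    (hn₁ : MAS.NormalForm S₁) (hn₂ : MAS.NormalForm S₂)
    (M : Automaton α R) (hU : MAS.SimU M S₂)
    (h : ∀ (R₂ : Type) (M₂ : Automaton α R₂), MAS.Models M₂ S₂ →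
      MAS.Models (M.prod M₂) S₁) :
    MAS.Models M (MAS.preQuotient S₁ S₂) := by
  obtain ⟨πU, hπU0, hπUstep⟩ := hU
  have hterm : M.Terminating := by
    obtain ⟨ht, -⟩ := h _ (MM S₂ hn₂ []) (MM_models S₂ hn₂ [])
    exact terminating_M S₂ hn₂ [] M ht
  refine ⟨hterm, fun r p => πU r p.2 ∧ ∀ X ∈ S₂.Acc p.2, ∀ L' : List (Set α),
    ∃ (L : List (Set α)) (π₁ : R × Option (Q₂ × List (Set α)) → Q₁ → Prop),
      MAS.Sat (M.prod (MM S₂ hn₂ L)) S₁ π₁ ∧ π₁ (r, some (p.2, X :: L')) p.1, ?_, ?_⟩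
  · refine ⟨hπU0, fun X hX L' => ?_⟩
    obtain ⟨-, π₁, hSat⟩ := h _ (MM S₂ hn₂ (X :: L')) (MM_models S₂ hn₂ (X :: L'))
    exact ⟨X :: L', π₁, hSat, hSat.1⟩
  · rintro r ⟨q₁, q₂⟩ ⟨hπu, hall⟩
    have hkey : ∀ X₂ ∈ S₂.Acc q₂, M.ready r ∩ X₂ ∈ S₁.Acc q₁ := by
      intro X₂ hX₂
      obtain ⟨L, π₁, hSat, hπ₁⟩ := hall X₂ hX₂ []
      have hr := (hSat.2 _ _ hπ₁).1
      rwa [prod_ready, MM_ready_some, hdI_cons S₂ hn₂ q₂ X₂ [] hX₂] at hr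
    have hsub : M.ready r ⊆ ⋃₀ S₂.Acc q₂ := (hπUstep r q₂ hπu).1
    have hready : M.ready r ∈ MAS.preAcc S₁ S₂ q₁ q₂ := by
      refine ⟨hkey, Set.subset_inter ?_ hsub⟩
      intro a ha
      obtain ⟨X₂, hX₂, haX₂⟩ := hsub ha
      exact ⟨M.ready r ∩ X₂, hkey X₂ hX₂, ha, haX₂⟩
    refine ⟨hready, ?_, ?_⟩
    · intro hrmk
      by_cases hq₂ : q₂ ∈ S₂.marked
      · obtain ⟨X₂, hX₂⟩ := Set.nonempty_iff_ne_empty.2 (hn₂ q₂).2.1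
        obtain ⟨L, π₁, hSat, hπ₁⟩ := hall X₂ hX₂ []
        have hm := (hSat.2 _ _ hπ₁).2.1
          ⟨hrmk, (MM_marked_some_iff S₂ hn₂ L q₂ _).2 hq₂⟩
        exact Or.inl hm
      · exact Or.inr hq₂
    · intro a r' har'
      have ha : a ∈ M.ready r := by
        simp only [Automaton.ready, Set.mem_setOf_eq, har']; rfl
      obtain ⟨q₂', hq₂', hπu'⟩ := (hπUstep r q₂ hπu).2 a r' har'
      obtain ⟨X₂, hX₂, haX₂⟩ := hsub ha
      have h1some : (S₁.tr q₁ a).isSome :=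
        ((hn₁ q₁).2.2.2 a).2 ⟨M.ready r ∩ X₂, hkey X₂ hX₂, ha, haX₂⟩
      obtain ⟨q₁', hq₁'⟩ := Option.isSome_iff_exists.1 h1some
      have hcond : ∃ X ∈ MAS.preAcc S₁ S₂ q₁ q₂, a ∈ X := ⟨M.ready r, hready, ha⟩
      refine ⟨(q₁', q₂'), ?_, hπu', fun X' hX' L'' => ?_⟩
      · show (MAS.preQuotient S₁ S₂).tr (q₁, q₂) a = some (q₁', q₂')
        simp only [MAS.preQuotient, hcond, if_true, hq₁', hq₂']
      · obtain ⟨L, π₁, hSat, hπ₁⟩ := hall X₂ hX₂ (X' :: L'')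
        have hstep : (M.prod (MM S₂ hn₂ L)).tr (r, some (q₂, X₂ :: X' :: L'')) a
            = some (r', some (q₂', X' :: L'')) := by
          rw [prod_tr_iff]
          refine ⟨har', (MM_tr_some_iff S₂ hn₂ L q₂ _ a _).2 ⟨?_, q₂', hq₂', rfl⟩⟩
          rw [hdI_cons S₂ hn₂ q₂ X₂ _ hX₂]
          exact haX₂
        obtain ⟨q₁'', hq₁'', hπ₁'⟩ := (hSat.2 _ _ hπ₁).2.2 a _ hstep
        rw [hq₁'] at hq₁''
        obtain rfl := Option.some_injective _ hq₁''.symm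
        exact ⟨L, π₁, hSat, hπ₁'⟩
end

section
/- Deadlock-freeness characterization, forward direction: if two MAS S₁ and S₂ are deadlock-free (every reachable pair (q₁,q₂) in Un(S₁) × Un(S₂) satisfies Dead(q₁,q₂)), then for any models M₁ ⊨ S₁ and M₂ ⊨ S₂, the product M₁ × M₂ has no deadlock. -/
attribute [local instance] Classical.propDecidable

/-- deadlock-freeness characterization, forward direction. -/
theorem stmt10 {α Q₁ Q₂ : Type} (S₁ : MAS α Q₁) (S₂ : MAS α Q₂)
    (hn₁ : MAS.NormalForm S₁) (hn₂ : MAS.NormalForm S₂)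
    (hdf : MAS.DeadlockFreeSpec S₁ S₂) :
    ∀ (R₁ R₂ : Type) (M₁ : Automaton α R₁) (M₂ : Automaton α R₂),
      MAS.Models M₁ S₁ → MAS.Models M₂ S₂ →
        ∀ p, (M₁.prod M₂).Reachable p → ¬ (M₁.prod M₂).Deadlock p := by
  intro R₁ R₂ M₁ M₂ hM₁ hM₂ p hreach hdl
  obtain ⟨hT₁, π₁, hπ₁i, hπ₁⟩ := hM₁
  obtain ⟨hT₂, π₂, hπ₂i, hπ₂⟩ := hM₂
  -- product ready = intersection of readies
  have hready : ∀ (r : R₁ × R₂), (M₁.prod M₂).ready r = M₁.ready r.1 ∩ M₂.ready r.2 := by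
    intro r
    ext a
    simp only [Automaton.ready, Automaton.prod, Set.mem_setOf_eq, Set.mem_inter_iff]
    constructor
    · intro h
      cases h1 : M₁.tr r.1 a with
      | none => simp [h1] at h
      | some r1 =>
        cases h2 : M₂.tr r.2 a with
        | none => simp [h1, h2] at h
        | some r2 => simp [h1, h2, Option.isSome]
    · rintro ⟨h1, h2⟩
      obtain ⟨r1, h1⟩ := Option.isSome_iff_exists.mp h1
      obtain ⟨r2, h2⟩ := Option.isSome_iff_exists.mp h2
      simp [h1, h2, Option.isSome]
  -- invariant along reachability
  have key : ∀ p, (M₁.prod M₂).Reachable p →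
      ∃ q₁ q₂, π₁ p.1 q₁ ∧ π₂ p.2 q₂ ∧ MAS.Partner S₁ S₂ q₁ q₂ := by
    intro p hp
    induction hp with
    | refl =>
      exact ⟨S₁.init, S₂.init, hπ₁i, hπ₂i, Relation.ReflTransGen.refl⟩
    | tail hseg hstep ih =>
      rename_i b c
      obtain ⟨q₁, q₂, hb1, hb2, hpart⟩ := ih
      obtain ⟨a, ha⟩ := hstep
      simp only [Automaton.prod] at ha
      cases h1 : M₁.tr b.1 a with
      | none => simp [h1] at ha
      | some r1 =>
        cases h2 : M₂.tr b.2 a with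
        | none => simp [h1, h2] at ha
        | some r2 =>
          simp [h1, h2] at ha
          obtain ⟨q₁', hq₁', hp1⟩ := (hπ₁ _ _ hb1).2.2 a r1 h1
          obtain ⟨q₂', hq₂', hp2⟩ := (hπ₂ _ _ hb2).2.2 a r2 h2
          refine ⟨q₁', q₂', ?_, ?_, ?_⟩
          · rw [← ha]; exact hp1
          · rw [← ha]; exact hp2
          · refine Relation.ReflTransGen.tail hpart ⟨a, ?_⟩
            simp [Automaton.prod, MAS.Un, hq₁', hq₂']
  obtain ⟨q₁, q₂, hp1, hp2, hpart⟩ := key p hreach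
  obtain ⟨hnm, hre⟩ := hdl
  rw [hready] at hre
  have h1 := (hπ₁ _ _ hp1).1
  have h2 := (hπ₂ _ _ hp2).1
  rcases hdf q₁ q₂ hpart with ⟨e1, e2⟩ | hcompat
  · -- both acceptance sets are {∅}, so readies are empty; terminating ⇒ marked
    have hr1 : M₁.ready p.1 = ∅ := by rw [e1] at h1; simpa using h1
    have hr2 : M₂.ready p.2 = ∅ := by rw [e2] at h2; simpa using h2
    have hm1 : p.1 ∈ M₁.marked := by
      by_contra hc
      exact hT₁.1 p.1 ⟨hc, hr1⟩
    have hm2 : p.2 ∈ M₂.marked := by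
      by_contra hc
      exact hT₂.1 p.2 ⟨hc, hr2⟩
    exact hnm ⟨hm1, hm2⟩
  · exact hcompat _ h1 _ h2 hre
end

section
/- Deadlock-freeness characterization, converse direction: if two MAS S₁ and S₂ (in normal form) are not deadlock-free, then there exist models M₁ ⊨ S₁ and M₂ ⊨ S₂ such that M₁ × M₂ contains a deadlock. -/
attribute [local instance] Classical.propDecidable

namespace Stmt11Aux

open MAS Automaton

variable {α Q Q₁ Q₂ : Type}

/-- Extended transition function on words. -/
def dstar (S : MAS α Q) (u : List α) : Option Q :=
  u.foldl (fun oq a => oq.bind (fun q => S.tr q a)) (some S.init)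

@[simp] lemma dstar_nil (S : MAS α Q) : dstar S [] = some S.init := rfl

lemma dstar_append (S : MAS α Q) (u : List α) (a : α) :
    dstar S (u ++ [a]) = (dstar S u).bind (fun q => S.tr q a) := by
  simp [dstar, List.foldl_append]

lemma foldl_none (S : MAS α Q) (v : List α) :
    v.foldl (fun oq a => oq.bind (fun q => S.tr q a)) none = none := by
  induction v with
  | nil => rfl
  | cons a v ih => simpa using ih

lemma dstar_prefix_isSome {S : MAS α Q} {u w : List α}
    (hp : u <+: w) (hw : (dstar S w).isSome) : (dstar S u).isSome := by
  obtain ⟨v, rfl⟩ := hp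
  by_contra hu
  have hu' : dstar S u = none := by
    cases h : dstar S u with
    | none => rfl
    | some q => rw [h] at hu; simp at hu
  have : dstar S (u ++ v) = none := by
    simp only [dstar, List.foldl_append] at *
    rw [show u.foldl (fun oq a => oq.bind (fun q => S.tr q a)) (some S.init) = none from hu']
    exact foldl_none S v
  rw [this] at hw; simp at hw

lemma next_unique {u w : List α} {a b : α}
    (h1 : u ++ [a] <+: w) (h2 : u ++ [b] <+: w) : a = b := by
  have hle : (u ++ [a]).length ≤ (u ++ [b]).length := by simp
  have := List.prefix_of_prefix_length_le h1 h2 hle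
  have heq : u ++ [a] = u ++ [b] := this.eq_of_length (by simp)
  simpa using heq

/-- The chosen ready set at state `u` of the word model. -/
noncomputable def fch (S : MAS α Q) (w : List α) (X : Set α) (u : List α) : Set α :=
  (dstar S u).elim ∅ (fun q =>
    if u = w then X
    else if hp : ∃ Y, Y ∈ S.Acc q ∧ ∀ a, u ++ [a] <+: w → a ∈ Y then hp.choose else ∅)

lemma fch_of_none {S : MAS α Q} {w u : List α} {X : Set α}
    (hq : dstar S u = none) : fch S w X u = ∅ := by
  simp [fch, hq]

lemma fch_of_eq {S : MAS α Q} {w : List α} {X : Set α} {q : Q}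
    (hq : dstar S w = some q) : fch S w X w = X := by
  simp [fch, hq]

lemma hp_holds {S : MAS α Q} {w u : List α} {q : Q}
    (hn : NormalForm S) (hw : (dstar S w).isSome) (hq : dstar S u = some q) :
    ∃ Y, Y ∈ S.Acc q ∧ ∀ a, u ++ [a] <+: w → a ∈ Y := by
  by_cases hc : ∃ a, u ++ [a] <+: w
  · obtain ⟨a, ha⟩ := hc
    have h1 : (dstar S (u ++ [a])).isSome := dstar_prefix_isSome ha hw
    rw [dstar_append, hq, Option.bind_some] at h1
    obtain ⟨Y, hY, haY⟩ := ((hn q).2.2.2 a).mp h1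
    exact ⟨Y, hY, fun b hb => (next_unique hb ha) ▸ haY⟩
  · have hacc : S.Acc q ≠ ∅ := (hn q).2.1
    obtain ⟨Y, hY⟩ := Set.nonempty_iff_ne_empty.mpr hacc
    exact ⟨Y, hY, fun a ha => absurd ⟨a, ha⟩ hc⟩

lemma fch_spec {S : MAS α Q} {w u : List α} {X : Set α} {q qf : Q}
    (hn : NormalForm S) (hw : dstar S w = some qf) (hX : X ∈ S.Acc qf)
    (hq : dstar S u = some q) :
    fch S w X u ∈ S.Acc q ∧ ∀ a, u ++ [a] <+: w → a ∈ fch S w X u := by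
  by_cases he : u = w
  · subst he
    have : q = qf := by rw [hq] at hw; exact (Option.some.injEq _ _ ▸ hw)
    subst this
    rw [fch_of_eq hq]
    refine ⟨hX, fun a ha => absurd (ha.length_le) ?_⟩
    simp
  · have hp := hp_holds hn (by rw [hw]; simp) hq
    have : fch S w X u = hp.choose := by simp [fch, hq, he, hp]
    rw [this]
    exact ⟨hp.choose_spec.1, hp.choose_spec.2⟩

/-- The word model. -/
noncomputable def mdl (S : MAS α Q) (w : List α) (X : Set α) : Automaton α (List α) where
  init := []
  tr := fun u a => if (dstar S u).isSome ∧ a ∈ fch S w X u then some (u ++ [a]) else none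
  marked := {u | fch S w X u = ∅}

lemma ready_mdl (S : MAS α Q) (w : List α) (X : Set α) (u : List α) :
    (mdl S w X).ready u = fch S w X u := by
  ext a
  simp only [Automaton.ready, mdl, Set.mem_setOf_eq]
  by_cases h : (dstar S u).isSome ∧ a ∈ fch S w X u
  · simp [h, h.2]
  · simp only [h, if_false, Option.isSome_none]
    constructor
    · intro hh; exact absurd hh (by simp)
    · intro ha
      cases hd : dstar S u with
      | none => rw [fch_of_none hd] at ha; exact absurd ha (Set.notMem_empty a)
      | some q => exact absurd ⟨by rw [hd]; simp, ha⟩ h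

lemma mdl_tr_eq {S : MAS α Q} {w : List α} {X : Set α} {u v : List α} {a : α}
    (h : (mdl S w X).tr u a = some v) :
    v = u ++ [a] ∧ (dstar S u).isSome ∧ a ∈ fch S w X u := by
  simp only [mdl] at h
  by_cases hc : (dstar S u).isSome ∧ a ∈ fch S w X u
  · rw [if_pos hc] at h; exact ⟨(Option.some.injEq _ _ ▸ h).symm, hc⟩
  · rw [if_neg hc] at h; exact absurd h (by simp)

lemma mdl_step_len {S : MAS α Q} {w : List α} {X : Set α} {u v : List α}
    (h : (mdl S w X).step u v) : u.length < v.length := by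
  obtain ⟨a, ha⟩ := h
  obtain ⟨rfl, -⟩ := mdl_tr_eq ha
  simp

lemma mdl_transGen_len {S : MAS α Q} {w : List α} {X : Set α} {u v : List α}
    (h : Relation.TransGen (mdl S w X).step u v) : u.length < v.length := by
  induction h with
  | single h => exact mdl_step_len h
  | tail _ h ih => exact lt_trans ih (mdl_step_len h)

lemma mdl_terminating (S : MAS α Q) (w : List α) (X : Set α) :
    (mdl S w X).Terminating := by
  constructor
  · rintro u ⟨hm, hr⟩
    rw [ready_mdl] at hr
    exact hm hr
  · rintro u ⟨⟨x, hx1, hx2⟩, -, -⟩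
    exact absurd (mdl_transGen_len (hx1.trans hx2)) (lt_irrefl _)

lemma mdl_models {S : MAS α Q} {w : List α} {X : Set α} {qf : Q}
    (hn : NormalForm S) (hw : dstar S w = some qf) (hX : X ∈ S.Acc qf) :
    Models (mdl S w X) S := by
  refine ⟨mdl_terminating S w X, fun u q => dstar S u = some q, rfl, ?_⟩
  intro u q hq
  refine ⟨?_, ?_, ?_⟩
  · rw [ready_mdl]; exact (fch_spec hn hw hX hq).1
  · intro hm
    simp only [mdl, Set.mem_setOf_eq] at hm
    have : (∅ : Set α) ∈ S.Acc q := hm ▸ (fch_spec hn hw hX hq).1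
    exact (hn q).2.2.1 this
  · intro a r' htr
    obtain ⟨rfl, -, ha⟩ := mdl_tr_eq htr
    have hsome : (S.tr q a).isSome :=
      ((hn q).2.2.2 a).mpr ⟨fch S w X u, (fch_spec hn hw hX hq).1, ha⟩
    obtain ⟨q', hq'⟩ := Option.isSome_iff_exists.mp hsome
    refine ⟨q', hq', ?_⟩
    show dstar S (u ++ [a]) = some q'
    rw [dstar_append, hq]
    simpa using hq'

lemma partner_word {S₁ : MAS α Q₁} {S₂ : MAS α Q₂} {q₁ : Q₁} {q₂ : Q₂}
    (h : Partner S₁ S₂ q₁ q₂) :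
    ∃ w, dstar S₁ w = some q₁ ∧ dstar S₂ w = some q₂ := by
  have : ∀ p : Q₁ × Q₂, (S₁.Un.prod S₂.Un).Reachable p →
      ∃ w, dstar S₁ w = some p.1 ∧ dstar S₂ w = some p.2 := by
    intro p hp
    induction hp with
    | refl => exact ⟨[], rfl, rfl⟩
    | tail _ hstep ih =>
      rename_i p p' _
      obtain ⟨w, hw₁, hw₂⟩ := ih
      obtain ⟨a, ha⟩ := hstep
      simp only [Automaton.prod, MAS.Un] at ha
      cases h1 : S₁.tr p.1 a <;> cases h2 : S₂.tr p.2 a <;>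
          simp only [h1, h2] at ha <;> try simp at ha
      refine ⟨w ++ [a], ?_, ?_⟩
      · rw [dstar_append, hw₁, Option.bind_some, h1, ← ha]
      · rw [dstar_append, hw₂, Option.bind_some, h2, ← ha]
  exact this (q₁, q₂) h

lemma reach_pair {S₁ : MAS α Q₁} {S₂ : MAS α Q₂} {w : List α}
    {X₁ X₂ : Set α} {qf₁ : Q₁} {qf₂ : Q₂}
    (hn₁ : NormalForm S₁) (hn₂ : NormalForm S₂)
    (hw₁ : dstar S₁ w = some qf₁) (hw₂ : dstar S₂ w = some qf₂)
    (hX₁ : X₁ ∈ S₁.Acc qf₁) (hX₂ : X₂ ∈ S₂.Acc qf₂) :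
    ∀ u, u <+: w → ((mdl S₁ w X₁).prod (mdl S₂ w X₂)).Reachable (u, u) := by
  intro u
  induction u using List.reverseRecOn with
  | nil => intro _; exact Relation.ReflTransGen.refl
  | append_singleton u a ih =>
    intro h
    have hu : u <+: w := (List.prefix_append u [a]).trans h
    refine (ih hu).tail ⟨a, ?_⟩
    obtain ⟨r₁, hr₁⟩ := Option.isSome_iff_exists.mp
      (dstar_prefix_isSome hu (by rw [hw₁]; simp))
    obtain ⟨r₂, hr₂⟩ := Option.isSome_iff_exists.mp
      (dstar_prefix_isSome hu (by rw [hw₂]; simp))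
    have ha₁ : a ∈ fch S₁ w X₁ u := (fch_spec hn₁ hw₁ hX₁ hr₁).2 a h
    have ha₂ : a ∈ fch S₂ w X₂ u := (fch_spec hn₂ hw₂ hX₂ hr₂).2 a h
    have ht₁ : (mdl S₁ w X₁).tr u a = some (u ++ [a]) := by
      simp only [mdl]; rw [if_pos ⟨by rw [hr₁]; simp, ha₁⟩]
    have ht₂ : (mdl S₂ w X₂).tr u a = some (u ++ [a]) := by
      simp only [mdl]; rw [if_pos ⟨by rw [hr₂]; simp, ha₂⟩]
    simp only [Automaton.prod, ht₁, ht₂]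

end Stmt11Aux

/-- deadlock-freeness characterization, converse direction. -/
theorem stmt11 {α Q₁ Q₂ : Type} (S₁ : MAS α Q₁) (S₂ : MAS α Q₂)
    (hn₁ : MAS.NormalForm S₁) (hn₂ : MAS.NormalForm S₂)
    (h : ¬ MAS.DeadlockFreeSpec S₁ S₂) :
    ∃ (R₁ R₂ : Type) (M₁ : Automaton α R₁) (M₂ : Automaton α R₂),
      MAS.Models M₁ S₁ ∧ MAS.Models M₂ S₂ ∧
        ∃ p, (M₁.prod M₂).Reachable p ∧ (M₁.prod M₂).Deadlock p := by
  classical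
  open Stmt11Aux in
  -- extract the bad pair
  simp only [MAS.DeadlockFreeSpec, not_forall] at h
  obtain ⟨q₁, q₂, hpart, hndead⟩ := h
  rw [MAS.DeadPair, not_or] at hndead
  obtain ⟨hnboth, hncompat⟩ := hndead
  simp only [MAS.Compat, not_forall] at hncompat
  obtain ⟨X₁, hX₁, X₂, hX₂, hdisj⟩ := hncompat
  rw [not_not] at hdisj
  -- adjust so that not both X₁, X₂ are empty
  have key : ∃ Y₁ ∈ S₁.Acc q₁, ∃ Y₂ ∈ S₂.Acc q₂, Y₁ ∩ Y₂ = ∅ ∧ ¬(Y₁ = ∅ ∧ Y₂ = ∅) := by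
    by_cases h1 : X₁ = ∅
    · by_cases h2 : X₂ = ∅
      · rw [not_and_or] at hnboth
        rcases hnboth with hA | hA
        · have : ∃ Y ∈ S₁.Acc q₁, Y ≠ ∅ := by
            by_contra hc
            push_neg at hc
            apply hA
            apply Set.eq_of_subset_of_subset
            · intro Y hY; simp [hc Y hY]
            · intro Y hY; simp at hY; rwa [hY, ← h1]
          obtain ⟨Y, hY, hYne⟩ := this
          exact ⟨Y, hY, X₂, hX₂, by rw [h2]; simp, by tauto⟩
        · have : ∃ Y ∈ S₂.Acc q₂, Y ≠ ∅ := by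
            by_contra hc
            push_neg at hc
            apply hA
            apply Set.eq_of_subset_of_subset
            · intro Y hY; simp [hc Y hY]
            · intro Y hY; simp at hY; rwa [hY, ← h2]
          obtain ⟨Y, hY, hYne⟩ := this
          exact ⟨X₁, hX₁, Y, hY, by rw [h1]; simp, by tauto⟩
      · exact ⟨X₁, hX₁, X₂, hX₂, hdisj, by tauto⟩
    · exact ⟨X₁, hX₁, X₂, hX₂, hdisj, by tauto⟩
  obtain ⟨Y₁, hY₁, Y₂, hY₂, hYdisj, hYne⟩ := key
  obtain ⟨w, hw₁, hw₂⟩ := partner_word hpart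
  refine ⟨List α, List α, mdl S₁ w Y₁, mdl S₂ w Y₂,
    mdl_models hn₁ hw₁ hY₁, mdl_models hn₂ hw₂ hY₂, (w, w),
    reach_pair hn₁ hn₂ hw₁ hw₂ hY₁ hY₂ w (List.prefix_refl w), ?_, ?_⟩
  · -- unmarked
    intro hm
    simp only [Automaton.prod, mdl, Set.mem_setOf_eq] at hm
    rw [fch_of_eq hw₁, fch_of_eq hw₂] at hm
    exact hYne hm
  · -- empty ready set
    ext a
    simp only [Automaton.ready, Automaton.prod, Set.mem_setOf_eq, Set.mem_empty_iff_false,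
      iff_false]
    intro ha
    cases h1 : (mdl S₁ w Y₁).tr w a with
    | none => rw [h1] at ha; simp at ha
    | some r₁ =>
      cases h2 : (mdl S₂ w Y₂).tr w a with
      | none => rw [h1, h2] at ha; simp at ha
      | some r₂ =>
        have ha₁ : a ∈ fch S₁ w Y₁ w := (mdl_tr_eq h1).2.2
        have ha₂ : a ∈ fch S₂ w Y₂ w := (mdl_tr_eq h2).2.2
        rw [fch_of_eq hw₁] at ha₁
        rw [fch_of_eq hw₂] at ha₂
        have : a ∈ Y₁ ∩ Y₂ := ⟨ha₁, ha₂⟩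
        rw [hYdisj] at this
        exact this
end

section
/- Unfolding preserves models: given MAS S₁ and S₂, the unfolding S_u of S₂ in relation to S₁ is equivalent to S₂ (an automaton is a model of S_u iff it is a model of S₂). -/
attribute [local instance] Classical.propDecidable

/-- the unfolding of `S₂` in relation to `S₁` is equivalent to `S₂`. -/
theorem stmt12 {α Q₁ Q₂ : Type} (S₁ : MAS α Q₁) (S₂ : MAS α Q₂) :
    ∀ (R : Type) (M : Automaton α R),
      MAS.Models M (MAS.unfoldWrt S₁ S₂) ↔ MAS.Models M S₂ := by
  intro R M
  constructor
  · rintro ⟨hT, π, hinit, hstep⟩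
    refine ⟨hT, fun r q₂ => ∃ o, π r (o, q₂), ⟨_, hinit⟩, ?_⟩
    rintro r q₂ ⟨o, hπ⟩
    obtain ⟨hAcc, hMark, hTr⟩ := hstep r (o, q₂) hπ
    refine ⟨hAcc, hMark, fun a r' hr' => ?_⟩
    obtain ⟨q', hq', hπ'⟩ := hTr a r' hr'
    rcases Option.map_eq_some_iff.mp hq' with ⟨q₂', h₂, rfl⟩
    exact ⟨q₂', h₂, _, hπ'⟩
  · rintro ⟨hT, π, hinit, hstep⟩
    refine ⟨hT, fun r p => π r p.2, hinit, ?_⟩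
    rintro r ⟨o, q₂⟩ hπ
    obtain ⟨hAcc, hMark, hTr⟩ := hstep r q₂ hπ
    refine ⟨hAcc, hMark, fun a r' hr' => ?_⟩
    obtain ⟨q₂', h₂, hπ'⟩ := hTr a r' hr'
    exact ⟨(o.bind (fun q₁ => S₁.tr q₁ a), q₂'), by simp [MAS.unfoldWrt, h₂], hπ'⟩
end

section
/- Single-partner property of the unfolding: for any state q_u of the unfolding S_u of S₂ in relation to S₁, the set of partners Q₁(q_u) = {q₁ | (q₁, q_u) reachable in Un(S₁) × Un(S_u)} has at most one element. -/
attribute [local instance] Classical.propDecidable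

/-- every state of the unfolding of `S₂` in relation to `S₁` has at
most one partner in `S₁`. -/
theorem stmt14 {α Q₁ Q₂ : Type} (S₁ : MAS α Q₁) (S₂ : MAS α Q₂) :
    ∀ qu : Option Q₁ × Q₂,
      {q₁ : Q₁ | MAS.Partner S₁ (MAS.unfoldWrt S₁ S₂) q₁ qu}.Subsingleton := by
  have inv : ∀ p : Q₁ × (Option Q₁ × Q₂),
      (S₁.Un.prod (MAS.unfoldWrt S₁ S₂).Un).Reachable p → p.2.1 = some p.1 := by
    intro p h
    induction h with
    | refl => rfl
    | tail hs hstep ih =>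
      obtain ⟨a, ha⟩ := hstep
      rename_i b c
      simp only [Automaton.prod, MAS.Un, MAS.unfoldWrt] at ha
      rcases h1 : S₁.tr b.1 a with _ | q₁' <;> rw [h1] at ha
      · simp at ha
      rcases h2 : (S₂.tr b.2.2 a).map
          (fun q₂' => (b.2.1.bind (fun q₁ => S₁.tr q₁ a), q₂')) with _ | q' <;>
        rw [h2] at ha
      · simp at ha
      rcases h3 : S₂.tr b.2.2 a with _ | q₂' <;> rw [h3] at h2
      · simp at h2
      simp only [Option.map_some] at h2
      cases ha
      cases h2
      simp [ih, Option.bind, h1]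
  intro qu x hx y hy
  have hx' := inv (x, qu) hx
  have hy' := inv (y, qu) hy
  simp only at hx' hy'
  rw [hx'] at hy'
  exact Option.some_injective _ hy'
end

section
/- Existence of unfoldings with single partners: for any two MAS S₁ and S₂, there exist MAS S₁′ and S₂′ with the same models as S₁ and S₂ respectively, such that every state of S₁′ has at most one partner in S₂′ and every state of S₂′ has at most one partner in S₁′ (where partners are computed via reachability in the product of the underlying automata). -/
attribute [local instance] Classical.propDecidable

/-- Unfolding preserves the set of models. -/
lemma models_unfoldWrt {α Q₁ Q₂ R : Type} (S₁ : MAS α Q₁) (S₂ : MAS α Q₂)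
    (M : Automaton α R) :
    MAS.Models M (MAS.unfoldWrt S₁ S₂) ↔ MAS.Models M S₂ := by
  unfold MAS.Models
  refine and_congr_right fun _ => ?_
  constructor
  · rintro ⟨π, h0, h⟩
    refine ⟨fun r q₂ => ∃ o, π r (o, q₂), ⟨_, h0⟩, ?_⟩
    rintro r q₂ ⟨o, hπ⟩
    obtain ⟨hA, hm, htr⟩ := h r (o, q₂) hπ
    refine ⟨hA, hm, fun a r' hr' => ?_⟩
    obtain ⟨p', hp', hπ'⟩ := htr a r' hr'
    simp only [MAS.unfoldWrt, Option.map_eq_some_iff] at hp'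
    obtain ⟨q₂', hq₂', rfl⟩ := hp'
    exact ⟨q₂', hq₂', _, hπ'⟩
  · rintro ⟨π₂, h0, h⟩
    refine ⟨fun r p => π₂ r p.2, h0, ?_⟩
    rintro r ⟨o, q₂⟩ hπ
    obtain ⟨hA, hm, htr⟩ := h r q₂ hπ
    refine ⟨hA, hm, fun a r' hr' => ?_⟩
    obtain ⟨q₂', hq₂', hπ'⟩ := htr a r' hr'
    refine ⟨(o.bind fun q₁ => S₁.tr q₁ a, q₂'), ?_, hπ'⟩
    simp [MAS.unfoldWrt, hq₂']

/-- Reachability invariant in the product of the two unfoldings. -/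
lemma unfold_reach_inv {α Q₁ Q₂ : Type} (S₁ : MAS α Q₁) (S₂ : MAS α Q₂)
    (x : (Option Q₂ × Q₁) × (Option (Option Q₂ × Q₁) × Q₂))
    (hx : ((MAS.unfoldWrt S₂ S₁).Un.prod
        (MAS.unfoldWrt (MAS.unfoldWrt S₂ S₁) S₂).Un).Reachable x) :
    x.2.1 = some x.1 ∧ x.1.1 = some x.2.2 := by
  induction hx with
  | refl => exact ⟨rfl, rfl⟩
  | tail hr hstep ih =>
    rename_i b c
    obtain ⟨h21, h11⟩ := ih
    obtain ⟨a, hstep⟩ := hstep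
    simp only [Automaton.prod, MAS.Un] at hstep
    rcases h1 : (MAS.unfoldWrt S₂ S₁).tr b.1 a with _ | p'
    · rw [h1] at hstep; simp at hstep
    rcases h2 : (MAS.unfoldWrt (MAS.unfoldWrt S₂ S₁) S₂).tr b.2 a with _ | s'
    · rw [h1, h2] at hstep; simp at hstep
    rw [h1, h2] at hstep
    simp only [Option.some_inj] at hstep
    subst hstep
    simp only [MAS.unfoldWrt, Option.map_eq_some_iff] at h1 h2
    obtain ⟨q₁', hq₁', rfl⟩ := h1
    obtain ⟨q₂', hq₂', rfl⟩ := h2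
    refine ⟨?_, ?_⟩
    · simp only [h21, Option.bind_some]
      simp [MAS.unfoldWrt, hq₁']
    · simp [h11, hq₂']

/-- existence of unfoldings with single partners. -/
theorem stmt15 {α Q₁ Q₂ : Type} (S₁ : MAS α Q₁) (S₂ : MAS α Q₂) :
    ∃ (Q₁' Q₂' : Type) (S₁' : MAS α Q₁') (S₂' : MAS α Q₂'),
      (∀ (R : Type) (M : Automaton α R), MAS.Models M S₁' ↔ MAS.Models M S₁) ∧
      (∀ (R : Type) (M : Automaton α R), MAS.Models M S₂' ↔ MAS.Models M S₂) ∧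
      (∀ q₁', {q₂' : Q₂' | MAS.Partner S₁' S₂' q₁' q₂'}.Subsingleton) ∧
      (∀ q₂', {q₁' : Q₁' | MAS.Partner S₁' S₂' q₁' q₂'}.Subsingleton) := by
  refine ⟨Option Q₂ × Q₁, Option (Option Q₂ × Q₁) × Q₂,
    MAS.unfoldWrt S₂ S₁, MAS.unfoldWrt (MAS.unfoldWrt S₂ S₁) S₂,
    fun R M => models_unfoldWrt S₂ S₁ M,
    fun R M => models_unfoldWrt (MAS.unfoldWrt S₂ S₁) S₂ M, ?_, ?_⟩
  · intro q₁' s hs s' hs'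
    obtain ⟨h1, h2⟩ := unfold_reach_inv S₁ S₂ (q₁', s) hs
    obtain ⟨h1', h2'⟩ := unfold_reach_inv S₁ S₂ (q₁', s') hs'
    obtain ⟨o, q₂⟩ := s
    obtain ⟨o', q₂'⟩ := s'
    simp only at h1 h1' h2 h2'
    rw [h2] at h2'
    injection h2' with h
    simp [h1, h1', h]
  · intro q₂' p hp p' hp'
    obtain ⟨h1, -⟩ := unfold_reach_inv S₁ S₂ (p, q₂') hp
    obtain ⟨h1', -⟩ := unfold_reach_inv S₁ S₂ (p', q₂') hp'
    rw [h1] at h1'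
    injection h1'
end
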